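/- arXiv:2601.01630 — 2 statements merged into one kernel-verified Lean document; each statement's English description precedes it below -/
import Mathlib

section
/- Inductive Scheduling induction step: let k : Fin M → ℕ with k i ≥ 2 for all i, and let m be an index with k m ≤ k i for all i. Define the reduced vector k' on the remaining tasks {i : Fin M // i ≠ m} by k' i = k i − ⌈k i / k m⌉. If k' is pinwheel-schedulable, then k is pinwheel-schedulable; moreover, there exists a schedule satisfying k which is regular with respect to m, i.e., in which task m is scheduled exactly at the slots 0, k m, 2·k m, 3·k m, … . -/
/-
Run task `m` at the multiples of `p = k m` and, in the remaining slots in increasing order, the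
schedule of the reduced instance. A window of length `k i` contains at most `⌈k i / p⌉`
multiples of `p`, so it contains at least `k i - ⌈k i / p⌉` free slots; these are consecutive
slots of the reduced schedule, which therefore runs task `i` in one of them.
-/

namespace Nat

variable {P : ℕ → Prop} [DecidablePred P]

theorem exists_count_eq_of_count_le_of_lt_count {a b n : ℕ} (ha : count P a ≤ n)
    (hb : n < count P b) : ∃ s, a ≤ s ∧ s < b ∧ P s ∧ count P s = n := by
  have hn : ∀ hf : (Set.ofPred P).Finite, n < hf.toFinset.card :=
    fun hf => hb.trans_le (count_le_card hf b)
  refine ⟨nth P n, ?_, nth_lt_of_lt_count hb, nth_mem n hn, count_nth hn⟩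
  by_contra! h
  have := count_monotone P h
  rw [count_nth_succ hn] at this
  omega

theorem count_not_add_count (n : ℕ) : count (fun s => ¬P s) n + count P n = n := by
  simp only [count_eq_card_filter_range]
  rw [add_comm, Finset.card_filter_add_card_filter_not, Finset.card_range]

theorem count_dvd_eq_ceil {p : ℕ} (hp : 0 < p) (n : ℕ) :
    (count (p ∣ ·) n : ℤ) = ⌈(n : ℚ) / p⌉ := by
  simpa [modEq_zero_iff_dvd] using count_modEq_card_eq_ceil n hp 0

theorem count_not_dvd_add_sub_ceil_le {p : ℕ} (hp : 0 < p) (t L : ℕ) :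
    (count (¬p ∣ ·) t : ℤ) + L - ⌈(L : ℚ) / p⌉ ≤ count (¬p ∣ ·) (t + L) := by
  have ht := count_not_add_count (P := (p ∣ ·)) t
  have htL := count_not_add_count (P := (p ∣ ·)) (t + L)
  have hceil : ⌈((t + L : ℕ) : ℚ) / p⌉ ≤ ⌈(t : ℚ) / p⌉ + ⌈(L : ℚ) / p⌉ := by
    push_cast
    rw [add_div]
    exact Int.ceil_add_le _ _
  rw [← count_dvd_eq_ceil hp, ← count_dvd_eq_ceil hp] at hceil
  omega

end Nat

open Nat

section Interleave

variable {T : Type*} (p : ℕ) (m : T) (σ' : ℕ → Option {i : T // i ≠ m})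

def interleave : ℕ → Option T := fun s =>
  if p ∣ s then some m else (σ' (count (¬p ∣ ·) s)).map Subtype.val

variable {p m σ'}

theorem interleave_eq_some_self_iff (t : ℕ) : interleave p m σ' t = some m ↔ p ∣ t := by
  by_cases h : p ∣ t
  · simp [interleave, h]
  · simp only [interleave, h, if_false, iff_false, Option.map_eq_some_iff]
    exact fun ⟨i, _, hi⟩ => i.2 hi

theorem exists_interleave_eq_some_self (hp : 0 < p) (t : ℕ) :
    ∃ s, t ≤ s ∧ s < t + p ∧ interleave p m σ' s = some m := by
  have hcount : count (p ∣ ·) t < count (p ∣ ·) (t + p) := by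
    have h := count_dvd_eq_ceil hp (t + p)
    rw [cast_add, add_div, div_self (by positivity), Int.ceil_add_one,
      ← count_dvd_eq_ceil hp] at h
    omega
  obtain ⟨s, ⟨hts, hst⟩, hs⟩ := exists_of_count_lt_count hcount
  exact ⟨s, hts, hst, (interleave_eq_some_self_iff s).2 hs⟩

theorem exists_interleave_eq_some (hp : 0 < p) {i : {i : T // i ≠ m}} {L c : ℕ}
    (hc : (c : ℤ) = ⌈(L : ℚ) / p⌉) (hσ' : ∀ t, ∃ s, t ≤ s ∧ s < t + (L - c) ∧ σ' s = some i)
    (t : ℕ) : ∃ s, t ≤ s ∧ s < t + L ∧ interleave p m σ' s = some i := by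
  obtain ⟨n, htn, hn, hσn⟩ := hσ' (count (¬p ∣ ·) t)
  have hfree := count_not_dvd_add_sub_ceil_le hp t L
  have hmono := count_monotone (¬p ∣ ·) (Nat.le_add_right t L)
  obtain ⟨s, hts, hst, hs, rfl⟩ :=
    exists_count_eq_of_count_le_of_lt_count htn (show n < count (¬p ∣ ·) (t + L) by omega)
  exact ⟨s, hts, hst, by simp [interleave, hs, hσn]⟩

end Interleave

theorem inductive_scheduling_step_general (M : ℕ) (k : Fin M → ℕ) (hk : ∀ i, 2 ≤ k i)
    (m : Fin M)
    (ck : Fin M → ℕ) (hck : ∀ i, (ck i : ℤ) = ⌈(k i : ℚ) / (k m : ℚ)⌉)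
    (hsched : ∃ σ' : ℕ → Option {i : Fin M // i ≠ m},
      ∀ (i : {i : Fin M // i ≠ m}) (t : ℕ),
        ∃ s, t ≤ s ∧ s < t + (k i.val - ck i.val) ∧ σ' s = some i) :
    ∃ σ : ℕ → Option (Fin M),
      (∀ (i : Fin M) (t : ℕ), ∃ s, t ≤ s ∧ s < t + k i ∧ σ s = some i) ∧
      (∀ t : ℕ, σ t = some m ↔ k m ∣ t) := by
  obtain ⟨σ', hσ'⟩ := hsched
  have hp : 0 < k m := by linarith [hk m]
  refine ⟨interleave (k m) m σ', fun i t => ?_, interleave_eq_some_self_iff⟩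
  by_cases hi : i = m
  · subst hi
    exact exists_interleave_eq_some_self hp t
  · exact exists_interleave_eq_some (i := ⟨i, hi⟩) hp (hck i) (hσ' ⟨i, hi⟩) t

/-- Inductive Scheduling induction step: let `k : Fin M → ℕ` with
`k i ≥ 2` for all `i`, and `m` an index of minimum value (`k m ≤ k i` for all `i`).
Let the reduced vector on the remaining tasks be `k' i = k i − ⌈k i / k m⌉`.
If the reduced vector is pinwheel-schedulable, then `k` is pinwheel-schedulable,
and moreover there is a satisfying schedule which is regular with respect to `m`,
i.e. task `m` is scheduled exactly at the slots `0, k m, 2·k m, …`. -/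
theorem inductive_scheduling_step (M : ℕ) (k : Fin M → ℕ) (hk : ∀ i, 2 ≤ k i)
    (m : Fin M) (hm : ∀ i, k m ≤ k i)
    (ck : Fin M → ℕ) (hck : ∀ i, (ck i : ℤ) = ⌈(k i : ℚ) / (k m : ℚ)⌉)
    (hsched : ∃ σ' : ℕ → Option {i : Fin M // i ≠ m},
      ∀ (i : {i : Fin M // i ≠ m}) (t : ℕ),
        ∃ s, t ≤ s ∧ s < t + (k i.val - ck i.val) ∧ σ' s = some i) :
    ∃ σ : ℕ → Option (Fin M),
      (∀ (i : Fin M) (t : ℕ), ∃ s, t ≤ s ∧ s < t + k i ∧ σ s = some i) ∧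
      (∀ t : ℕ, σ t = some m ↔ k m ∣ t) :=
  inductive_scheduling_step_general M k hk m ck hck hsched
end

section
/- Optimal path-delay on symmetric trees (combinatorial content of the delay-minimizing deadline τ*): let D ≥ 1 and let N_1, …, N_D be positive integers. Over all families of schedules {σ_v : ℕ → Option (Fin N_{d+1})}, one for each level-d node v with 0 ≤ d < D, in which every child of every node has a finite maximum inter-scheduling time k_{e}, the minimum over families of the maximum over root-to-leaf paths (c_1, …, c_D) of Σ_{d=1}^{D} k_{e(c_1,…,c_d)} equals Σ_{d=1}^{D} N_d. The minimum is attained by the universal round-robin (URR) family σ_v(t) = some (t mod N_{d+1}) for every level-d node v, under which every level-d link has maximum inter-scheduling time exactly N_d. -/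
/-!
Along every root-to-leaf path the delays add up, so it suffices to bound each link separately.
Lower bound: a schedule of `n` tasks in which each task recurs serves at most `K` distinct tasks
in the first `K` slots, so some task has maximum inter-scheduling time at least `n`; choosing such
a slow child greedily at every node from the root down yields a path of total delay at least
`Σ_d N d`. Upper bound: round robin on `n` tasks serves every task in every window of `n` slots,
and the window starting right after a task's slot shows that `n - 1` slots are not enough.
-/

section Schedule

variable {α : Type*}

def OccursInEveryWindow (σ : ℕ → Option α) (c : α) (K : ℕ) : Prop :=
  ∀ t, ∃ u, t ≤ u ∧ u < t + K ∧ σ u = some c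

noncomputable def interSchedulingTime (σ : ℕ → Option α) (c : α) : ℕ :=
  sInf {K | OccursInEveryWindow σ c K}

theorem occursInEveryWindow_interSchedulingTime {σ : ℕ → Option α} {c : α}
    (h : ∃ K, OccursInEveryWindow σ c K) :
    OccursInEveryWindow σ c (interSchedulingTime σ c) :=
  Nat.sInf_mem h

theorem exists_card_le_interSchedulingTime [Fintype α] [Nonempty α] (σ : ℕ → Option α)
    (hσ : ∀ c, ∃ K, OccursInEveryWindow σ c K) :
    ∃ c, Fintype.card α ≤ interSchedulingTime σ c := by
  classical
  by_contra! hfast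
  have hserved : (Finset.univ.image some : Finset (Option α)) ⊆
      (Finset.range (Fintype.card α - 1)).image σ := by
    intro x hx
    obtain ⟨c, -, rfl⟩ := Finset.mem_image.mp hx
    obtain ⟨u, -, hu, hσu⟩ := occursInEveryWindow_interSchedulingTime (hσ c) 0
    exact Finset.mem_image.mpr ⟨u, Finset.mem_range.mpr (by have := hfast c; omega), hσu⟩
  have hcard := (Finset.card_le_card hserved).trans Finset.card_image_le
  rw [Finset.card_image_of_injective _ (Option.some_injective α), Finset.card_univ,
    Finset.card_range] at hcard
  have : 0 < Fintype.card α := Fintype.card_pos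
  omega

end Schedule

theorem interSchedulingTime_roundRobin {n : ℕ} (hn : 0 < n) (c : Fin n) :
    interSchedulingTime (fun u => some (⟨u % n, Nat.mod_lt u hn⟩ : Fin n)) c = n := by
  have hwindow : OccursInEveryWindow (fun u => some (⟨u % n, Nat.mod_lt u hn⟩ : Fin n)) c n := by
    intro t
    have hc : c.val ∈ (Finset.Ico t (t + n)).image (· % n) := by
      rw [Nat.image_Ico_mod]
      exact Finset.mem_range.mpr c.isLt
    obtain ⟨u, hu, hmod⟩ := Finset.mem_image.mp hc
    obtain ⟨htu, hut⟩ := Finset.mem_Ico.mp hu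
    exact ⟨u, htu, hut, by simp [hmod]⟩
  refine le_antisymm (Nat.sInf_le hwindow) (le_csInf ⟨n, hwindow⟩ fun K hK => ?_)
  -- the next slot for `c` after slot `c` is `c + n`
  obtain ⟨u, hcu, huK, hu⟩ := hK (c + 1)
  have hmod : u % n = c := by simpa [Fin.ext_iff] using hu
  have hdiv := Nat.div_add_mod u n
  have hquot : 0 < u / n := Nat.pos_of_ne_zero fun h => by rw [h] at hdiv; omega
  have : n ≤ n * (u / n) := Nat.le_mul_of_pos_right n hquot
  omega

section GreedyPath

variable {D : ℕ} {α : ℕ → Type*}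

def greedyPath (pick : ∀ d : Fin D, ((j : Fin d) → α j) → α d) : (d : Fin D) → α d
  | d => pick d fun j => greedyPath pick ⟨j, j.isLt.trans d.isLt⟩
termination_by d => d.val

theorem greedyPath_apply (pick : ∀ d : Fin D, ((j : Fin d) → α j) → α d) (d : Fin D) :
    greedyPath pick d = pick d fun j => greedyPath pick ⟨j, j.isLt.trans d.isLt⟩ := by
  rw [greedyPath]

end GreedyPath

theorem optimal_path_delay_symmetric_tree_general
    (D : ℕ) (N : ℕ → ℕ) (hN : ∀ d, 0 < N d) :
    (∀ σ : ∀ d : Fin D, ((j : Fin d.val) → Fin (N j.val)) → ℕ → Option (Fin (N d.val)),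
      (∀ (d : Fin D) (v : (j : Fin d.val) → Fin (N j.val)) (c : Fin (N d.val)),
        ∃ K : ℕ, ∀ t : ℕ, ∃ u, t ≤ u ∧ u < t + K ∧ σ d v u = some c) →
      ∃ c : (d : Fin D) → Fin (N d.val),
        (∑ d : Fin D, N d.val) ≤
          ∑ d : Fin D,
            sInf {K : ℕ | ∀ t : ℕ, ∃ u, t ≤ u ∧ u < t + K ∧
              σ d (fun j => c ⟨j.val, j.isLt.trans d.isLt⟩) u = some (c d)}) ∧
    (∀ (d : Fin D) (c : Fin (N d.val)),
      sInf {K : ℕ | ∀ t : ℕ, ∃ u, t ≤ u ∧ u < t + K ∧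
        (some (⟨u % N d.val, Nat.mod_lt u (hN d.val)⟩ : Fin (N d.val))
          : Option (Fin (N d.val))) = some c} = N d.val) := by
  refine ⟨fun σ hσ => ?_, fun d => interSchedulingTime_roundRobin (hN d)⟩
  have hslow (d : Fin D) (v : (j : Fin d) → Fin (N j)) :
      ∃ c, N d ≤ interSchedulingTime (σ d v) c := by
    have : Nonempty (Fin (N d)) := ⟨⟨0, hN d⟩⟩
    simpa using exists_card_le_interSchedulingTime (σ d v) (hσ d v)
  choose pick hpick using hslow
  refine ⟨greedyPath (α := fun d => Fin (N d)) pick, Finset.sum_le_sum fun d _ => ?_⟩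
  change N d ≤ interSchedulingTime _ _
  rw [greedyPath_apply (α := fun d => Fin (N d)) pick d]
  exact hpick d _

/-- Optimal path-delay on symmetric trees: with the symmetric tree of
depth `D ≥ 1` and positive branching numbers `N 0, …, N (D-1)` (0-indexed), consider
families of schedules `σ d v : ℕ → Option (Fin (N d))`, one for each level-`d` node
`v : (j : Fin d) → Fin (N j)`.  The maximum inter-scheduling time of a child `c` in a
schedule is the least `K` such that `c` occurs in every window of `K` consecutive
slots.  Then: (a) for every family in which every child of every node has a finite
maximum inter-scheduling time, there is a root-to-leaf path whose sum of maximum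
inter-scheduling times is at least `Σ_d N d`; and (b) under the universal round-robin
family `σ d v t = some (t mod N d)`, every level-`d` link has maximum inter-scheduling
time exactly `N d` (so the minimum over families of the maximum path-sum equals
`Σ_d N d`, attained by URR). -/
theorem optimal_path_delay_symmetric_tree
    (D : ℕ) (hD : 1 ≤ D) (N : ℕ → ℕ) (hN : ∀ d, 0 < N d) :
    (∀ σ : ∀ d : Fin D, ((j : Fin d.val) → Fin (N j.val)) → ℕ → Option (Fin (N d.val)),
      (∀ (d : Fin D) (v : (j : Fin d.val) → Fin (N j.val)) (c : Fin (N d.val)),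
        ∃ K : ℕ, ∀ t : ℕ, ∃ u, t ≤ u ∧ u < t + K ∧ σ d v u = some c) →
      ∃ c : (d : Fin D) → Fin (N d.val),
        (∑ d : Fin D, N d.val) ≤
          ∑ d : Fin D,
            sInf {K : ℕ | ∀ t : ℕ, ∃ u, t ≤ u ∧ u < t + K ∧
              σ d (fun j => c ⟨j.val, j.isLt.trans d.isLt⟩) u = some (c d)}) ∧
    (∀ (d : Fin D) (c : Fin (N d.val)),
      sInf {K : ℕ | ∀ t : ℕ, ∃ u, t ≤ u ∧ u < t + K ∧
        (some (⟨u % N d.val, Nat.mod_lt u (hN d.val)⟩ : Fin (N d.val))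
          : Option (Fin (N d.val))) = some c} = N d.val) :=
  optimal_path_delay_symmetric_tree_general D N hN
end
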